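/- arXiv:1101.3355 — 2 statements merged into one kernel-verified Lean document; each statement's English description precedes it below -/
import Mathlib

section
/- Let X be a geodesic metric space in which every geodesic segment extends to an infinite geodesic ray, let E ⊆ X be a complete convex subset isometric to the Euclidean plane, and let O ∈ X, r > 0. Then for any two points P, Q ∈ S(O, r) ∩ E, there is a path from P to Q avoiding the open ball B(O, r) of length at most (π + 2)·r. -/
open Set Metric

/-- A (unit-speed) geodesic segment from `x` to `y` in a metric space. -/
structure GeodesicSeg (X : Type*) [MetricSpace X] (x y : X) where
  toFun : ℝ → X
  source : toFun 0 = x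
  target : toFun (dist x y) = y
  isom : ∀ s ∈ Set.Icc (0:ℝ) (dist x y), ∀ t ∈ Set.Icc (0:ℝ) (dist x y),
    dist (toFun s) (toFun t) = |s - t|

/-- A geodesic metric space: every pair of points is joined by a geodesic. -/
def IsGeodesicSpace (X : Type*) [MetricSpace X] : Prop :=
  ∀ x y : X, Nonempty (GeodesicSeg X x y)

/-- The comparison point in the Euclidean plane at distance `s` from `p'` along
the segment from `p'` to `q'`, where `dpq` is the length of that segment. -/
noncomputable def cmpPt (p' q' : EuclideanSpace ℝ (Fin 2)) (dpq s : ℝ) :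
    EuclideanSpace ℝ (Fin 2) :=
  AffineMap.lineMap p' q' (s / dpq)

/-- `X` is CAT(0): it is geodesic, and for every geodesic triangle and every
comparison triangle in the Euclidean plane, distances between points on two
sides of the triangle are bounded by the distances between the corresponding
comparison points. -/
def IsCAT0 (X : Type*) [MetricSpace X] : Prop :=
  IsGeodesicSpace X ∧
  ∀ (p q r : X) (γ : GeodesicSeg X p q) (η : GeodesicSeg X p r)
    (p' q' r' : EuclideanSpace ℝ (Fin 2)),
    dist p' q' = dist p q → dist p' r' = dist p r → dist q' r' = dist q r →
    ∀ s ∈ Set.Icc (0:ℝ) (dist p q), ∀ t ∈ Set.Icc (0:ℝ) (dist p r),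
      dist (γ.toFun s) (η.toFun t) ≤
        dist (cmpPt p' q' (dist p q) s) (cmpPt p' r' (dist p r) t)

/-- A subset `C` is convex if every geodesic segment between points of `C`
stays in `C`. -/
def IsConvexSubset (X : Type*) [MetricSpace X] (C : Set X) : Prop :=
  ∀ x ∈ C, ∀ y ∈ C, ∀ γ : GeodesicSeg X x y,
    ∀ t ∈ Set.Icc (0:ℝ) (dist x y), γ.toFun t ∈ C

/-- `π` is the closest-point projection onto `C`: for each `x`, `π x` is the
unique point of `C` closest to `x`. -/
def IsProjOnto {X : Type*} [MetricSpace X] (C : Set X) (π : X → X) : Prop :=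
  ∀ x : X, π x ∈ C ∧ (∀ y ∈ C, dist x (π x) ≤ dist x y) ∧
    (∀ y ∈ C, dist x y = dist x (π x) → y = π x)

/-- Every nonconstant geodesic segment extends to an infinite geodesic ray. -/
def GeodesicExtension (X : Type*) [MetricSpace X] : Prop :=
  ∀ (x y : X), x ≠ y → ∀ γ : GeodesicSeg X x y,
    ∃ ρ : ℝ → X, (∀ s t : ℝ, 0 ≤ s → 0 ≤ t → dist (ρ s) (ρ t) = |s - t|) ∧
      ∀ t ∈ Set.Icc (0:ℝ) (dist x y), ρ t = γ.toFun t

/-!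
Let `c` be the point of the flat closest to `O`, at distance `d`. Comparison with a Euclidean
triangle gives the CN inequality
`dist O (γ t) ^ 2 ≤ (1 - t) dist O (γ 0) ^ 2 + t dist O (γ 1) ^ 2 - t (1 - t) ℓ(γ) ^ 2`
along geodesics `γ`. Applied to straight segments of the flat issuing from `c`, together with
the minimality of `c`, it shows that the distance to `O` is nondecreasing along every such
segment and that `d ^ 2 + |z - c| ^ 2 ≤ dist O z ^ 2` for every `z` in the flat.
So with `R = √(r ^ 2 - d ^ 2)`, the points `P` and `Q` lie in the disc of radius `R` about `c`,
while the circle bounding it and the outward radial segments through `P` and `Q` avoid `B(O, r)`.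
Going out radially from `P` to that circle, along its shorter arc (of length at most `π R`) and
radially back in to `Q` takes length at most `(π + 2) R ≤ (π + 2) r`.
-/

open scoped ENNReal NNReal
open Complex Real Filter Topology

theorem exists_triangle_in_plane {a b c : ℝ} (hab : a ≤ b + c) (hbc : b ≤ a + c)
    (hca : c ≤ a + b) :
    ∃ x y z : EuclideanSpace ℝ (Fin 2), dist x y = a ∧ dist x z = b ∧ dist y z = c := by
  -- Law of cosines. For `a = 0` the division returns `u = 0`, which still works as then `b = c`.
  set u := (a ^ 2 + b ^ 2 - c ^ 2) / (2 * a)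
  have hu : u ^ 2 ≤ b ^ 2 := by
    rcases eq_or_ne a 0 with rfl | ha
    · simpa [u] using sq_nonneg b
    · rw [div_pow, div_le_iff₀ (by positivity)]
      nlinarith [mul_nonneg (by linarith : 0 ≤ a + b - c) (by linarith : 0 ≤ c - a + b),
        mul_nonneg (by linarith : 0 ≤ a + b + c) (by linarith : 0 ≤ c + a - b)]
  set v := √(b ^ 2 - u ^ 2)
  have hv : v ^ 2 = b ^ 2 - u ^ 2 := Real.sq_sqrt (by linarith)
  have dist_eq (x₁ x₂ y₁ y₂ : ℝ) :
      dist !₂[x₁, x₂] !₂[y₁, y₂] = √((x₁ - y₁) ^ 2 + (x₂ - y₂) ^ 2) := by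
    simp [EuclideanSpace.dist_eq, Fin.sum_univ_two, Real.dist_eq, sq_abs]
  have hcos : a ^ 2 - 2 * a * u + b ^ 2 = c ^ 2 := by
    rcases eq_or_ne a 0 with rfl | ha
    · obtain rfl : b = c := by linarith
      simp [u]
    · simp only [u]; field_simp; ring
  refine ⟨!₂[0, 0], !₂[a, 0], !₂[u, v], ?_, ?_, ?_⟩ <;> rw [dist_eq]
  · rw [show (0 - a) ^ 2 + (0 - 0) ^ 2 = a ^ 2 by ring, Real.sqrt_sq (by linarith)]
  · rw [show (0 - u) ^ 2 + (0 - v) ^ 2 = b ^ 2 by linear_combination hv,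
      Real.sqrt_sq (by linarith)]
  · rw [show (a - u) ^ 2 + (0 - v) ^ 2 = c ^ 2 by linear_combination hv + hcos,
      Real.sqrt_sq (by linarith)]

theorem cmpPt_mul_of_dist_eq {p' q' : EuclideanSpace ℝ (Fin 2)} {d : ℝ} (h : dist p' q' = d)
    (t : ℝ) : cmpPt p' q' d (t * d) = AffineMap.lineMap p' q' t := by
  rcases eq_or_ne d 0 with rfl | hd
  · obtain rfl := dist_eq_zero.1 h
    simp [cmpPt]
  · rw [cmpPt, mul_div_cancel_right₀ t hd]

theorem dist_sq_lineMap {V : Type*} [NormedAddCommGroup V] [InnerProductSpace ℝ V]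
    (x y z : V) (t : ℝ) :
    dist (AffineMap.lineMap x y t) z ^ 2 =
      (1 - t) * dist x z ^ 2 + t * dist y z ^ 2 - t * (1 - t) * dist x y ^ 2 := by
  have h : AffineMap.lineMap x y t - z = (1 - t) • (x - z) + t • (y - z) := by
    rw [AffineMap.lineMap_apply_module]; module
  have h' : x - y = (x - z) - (y - z) := by abel
  rw [dist_eq_norm, dist_eq_norm, dist_eq_norm, dist_eq_norm, h, h']
  generalize x - z = a, y - z = b
  rw [norm_add_sq_real, norm_sub_sq_real, norm_smul, norm_smul, real_inner_smul_left,
    real_inner_smul_right, Real.norm_eq_abs, Real.norm_eq_abs, mul_pow, mul_pow, sq_abs, sq_abs]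
  ring

namespace Isometry

variable {X V : Type*} [MetricSpace X] [NormedAddCommGroup V] [NormedSpace ℝ V] {F : V → X}

noncomputable def geodesicSeg (hF : Isometry F) (a b : V) : GeodesicSeg X (F a) (F b) where
  toFun s := F (AffineMap.lineMap a b (s / dist a b))
  source := by simp
  target := by
    rcases eq_or_ne a b with rfl | hab
    · simp
    · rw [hF.dist_eq, div_self (dist_ne_zero.2 hab), AffineMap.lineMap_apply_one]
  isom s hs t ht := by
    rw [hF.dist_eq] at hs ht
    rcases eq_or_ne a b with rfl | hab
    · simp_all
    · rw [hF.dist_eq, dist_lineMap_lineMap, Real.dist_eq, ← sub_div, abs_div,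
        abs_of_nonneg dist_nonneg, div_mul_cancel₀ _ (dist_ne_zero.2 hab)]

theorem geodesicSeg_toFun_mul (hF : Isometry F) (a b : V) (t : ℝ) :
    (hF.geodesicSeg a b).toFun (t * dist (F a) (F b)) = F (AffineMap.lineMap a b t) := by
  rcases eq_or_ne a b with rfl | hab
  · simp [geodesicSeg]
  · simp only [geodesicSeg, hF.dist_eq, mul_div_cancel_right₀ t (dist_ne_zero.2 hab)]

end Isometry

theorem Isometry.exists_forall_dist_le {X V : Type*} [MetricSpace X] [MetricSpace V]
    [ProperSpace V] [Nonempty V] {F : V → X} (hF : Isometry F) (o : X) :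
    ∃ c, ∀ z, dist o (F c) ≤ dist o (F z) := by
  obtain ⟨v⟩ := ‹Nonempty V›
  refine (continuous_const.dist hF.continuous).exists_forall_le' v ?_
  filter_upwards [(tendsto_dist_left_cocompact_atTop v).eventually_ge_atTop
    (2 * dist o (F v))] with z hz
  linarith [hF.dist_eq v z, dist_triangle (F v) o (F z), dist_comm (F v) o]

namespace IsCAT0

variable {X V : Type*} [MetricSpace X] [NormedAddCommGroup V] [NormedSpace ℝ V] {F : V → X}

theorem dist_sq_geodesicSeg_le (hX : IsCAT0 X) {p q : X} (γ : GeodesicSeg X p q) (o : X)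
    {t : ℝ} (ht : t ∈ Icc (0 : ℝ) 1) :
    dist o (γ.toFun (t * dist p q)) ^ 2 ≤
      (1 - t) * dist o p ^ 2 + t * dist o q ^ 2 - t * (1 - t) * dist p q ^ 2 := by
  obtain ⟨η⟩ := hX.1 p o
  obtain ⟨p', q', o', hpq, hpo, hqo⟩ := exists_triangle_in_plane
    (dist_triangle_right p q o) (dist_triangle p q o) (dist_triangle_left q o p)
  have hcmp := hX.2 p q o γ η p' q' o' hpq hpo hqo (t * dist p q)
    ⟨mul_nonneg ht.1 dist_nonneg, mul_le_of_le_one_left dist_nonneg ht.2⟩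
    (dist p o) ⟨dist_nonneg, le_rfl⟩
  have ho' : cmpPt p' o' (dist p o) (dist p o) = o' := by
    simpa using cmpPt_mul_of_dist_eq hpo 1
  rw [cmpPt_mul_of_dist_eq hpq, ho', η.target] at hcmp
  calc dist o (γ.toFun (t * dist p q)) ^ 2 ≤ dist (AffineMap.lineMap p' q' t) o' ^ 2 := by
        rw [dist_comm]; gcongr
    _ = _ := by rw [dist_sq_lineMap, hpq, hpo, hqo, dist_comm o, dist_comm o]

theorem dist_sq_lineMap_le (hX : IsCAT0 X) (hF : Isometry F) (o : X) (a b : V) {t : ℝ}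
    (ht : t ∈ Icc (0 : ℝ) 1) :
    dist o (F (AffineMap.lineMap a b t)) ^ 2 ≤
      (1 - t) * dist o (F a) ^ 2 + t * dist o (F b) ^ 2 - t * (1 - t) * dist a b ^ 2 := by
  have h := hX.dist_sq_geodesicSeg_le (hF.geodesicSeg a b) o ht
  rwa [hF.geodesicSeg_toFun_mul, hF.dist_eq] at h

variable {o : X} {c : V}

theorem dist_le_of_wbtw (hX : IsCAT0 X) (hF : Isometry F)
    (hc : ∀ z, dist o (F c) ≤ dist o (F z)) {x z : V} (h : Wbtw ℝ c x z) :
    dist o (F x) ≤ dist o (F z) := by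
  obtain ⟨t, ht, rfl⟩ := h
  have hcz := hc z
  have hconv := hX.dist_sq_lineMap_le hF o c z ht
  refine (sq_le_sq₀ dist_nonneg dist_nonneg).1 (hconv.trans ?_)
  nlinarith [mul_nonneg ht.1 (sub_nonneg.2 ht.2), pow_le_pow_left₀ dist_nonneg hcz 2,
    sq_nonneg (dist c z), ht.2]

theorem dist_sq_add_dist_sq_le (hX : IsCAT0 X) (hF : Isometry F)
    (hc : ∀ z, dist o (F c) ≤ dist o (F z)) (z : V) :
    dist o (F c) ^ 2 + dist z c ^ 2 ≤ dist o (F z) ^ 2 := by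
  rw [dist_comm z c]
  -- CN inequality at `lineMap c z t` against minimality of `c`, divided by `t`; then `t → 0⁺`.
  have key : ∀ t ∈ Ioo (0 : ℝ) 1,
      dist o (F c) ^ 2 + (1 - t) * dist c z ^ 2 ≤ dist o (F z) ^ 2 := by
    intro t ht
    have hconv := hX.dist_sq_lineMap_le hF o c z (Ioo_subset_Icc_self ht)
    have hmin := pow_le_pow_left₀ dist_nonneg (hc (AffineMap.lineMap c z t)) 2
    refine le_of_mul_le_mul_left ?_ ht.1
    nlinarith
  have hlim : Tendsto (fun t : ℝ => dist o (F c) ^ 2 + (1 - t) * dist c z ^ 2) (𝓝[>] 0)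
      (𝓝 (dist o (F c) ^ 2 + dist c z ^ 2)) := by
    refine tendsto_nhdsWithin_of_tendsto_nhds ?_
    exact (by fun_prop : Continuous fun t : ℝ =>
      dist o (F c) ^ 2 + (1 - t) * dist c z ^ 2).tendsto' 0 _ (by ring)
  exact le_of_tendsto hlim (by filter_upwards [Ioo_mem_nhdsGT one_pos] with t ht using key t ht)

theorem dist_le_sqrt_of_dist_eq (hX : IsCAT0 X) (hF : Isometry F)
    (hc : ∀ z, dist o (F c) ≤ dist o (F z)) {x : V} {r : ℝ} (hx : dist o (F x) = r) :
    dist x c ≤ √(r ^ 2 - dist o (F c) ^ 2) := by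
  refine Real.le_sqrt_of_sq_le ?_
  subst hx
  linarith [hX.dist_sq_add_dist_sq_le hF hc x]

theorem le_dist_of_dist_eq_sqrt (hX : IsCAT0 X) (hF : Isometry F)
    (hc : ∀ z, dist o (F c) ≤ dist o (F z)) {w : V} {r : ℝ} (hr : dist o (F c) ≤ r)
    (hw : dist w c = √(r ^ 2 - dist o (F c) ^ 2)) : r ≤ dist o (F w) := by
  have hsq : dist w c ^ 2 = r ^ 2 - dist o (F c) ^ 2 := by
    rw [hw, Real.sq_sqrt (by nlinarith [dist_nonneg (x := o) (y := F c)])]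
  refine (sq_le_sq₀ (dist_nonneg.trans hr) dist_nonneg).1 ?_
  linarith [hX.dist_sq_add_dist_sq_le hF hc w]

end IsCAT0

theorem LipschitzOnWith.eVariationOn_Icc_le {Y : Type*} [PseudoEMetricSpace Y] {g : ℝ → Y}
    {K : ℝ≥0} {a b : ℝ} (h : LipschitzOnWith K g (Icc a b)) :
    eVariationOn g (Icc a b) ≤ K * ENNReal.ofReal (b - a) := by
  simpa [eVariationOn_id_Icc] using h.comp_eVariationOn_le (g := id) (mapsTo_id _)

namespace Path

variable {Y : Type*} [PseudoEMetricSpace Y] {x y z : Y}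

theorem eVariationOn_extend_trans (γ : Path x y) (γ' : Path y z) :
    eVariationOn (γ.trans γ').extend (Icc 0 1) =
      eVariationOn γ.extend (Icc 0 1) + eVariationOn γ'.extend (Icc 0 1) := by
  have h₁ : EqOn (γ.trans γ').extend (γ.extend ∘ fun t => 2 * t) (Icc 0 (1 / 2)) :=
    fun t ht => extend_trans_of_le_half γ γ' ht.2
  have h₂ : EqOn (γ.trans γ').extend (γ'.extend ∘ fun t => 2 * t - 1) (Icc (1 / 2) 1) :=
    fun t ht => extend_trans_of_half_le γ γ' ht.1
  have hsplit := eVariationOn.Icc_add_Icc (γ.trans γ').extend (s := univ)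
    (by norm_num : (0 : ℝ) ≤ 1 / 2) (by norm_num : (1 / 2 : ℝ) ≤ 1) (mem_univ _)
  simp only [univ_inter] at hsplit
  rw [← hsplit, eVariationOn.eq_of_eqOn h₁, eVariationOn.eq_of_eqOn h₂,
    eVariationOn.comp_eq_of_monotoneOn _ _ (fun s _ t _ hst => by linarith),
    eVariationOn.comp_eq_of_monotoneOn _ _ (fun s _ t _ hst => by linarith)]
  congr 2
  · rw [image_mul_left_Icc (by norm_num)] <;> norm_num
  · rw [show (fun t : ℝ => 2 * t - 1) = (· - 1) ∘ (2 * ·) from rfl, image_comp,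
      image_mul_left_Icc (by norm_num), image_sub_const_Icc] <;> norm_num

theorem eVariationOn_extend_segment_le {E : Type*} [NormedAddCommGroup E] [NormedSpace ℝ E]
    (a b : E) :
    eVariationOn (Path.segment a b).extend (Icc 0 1) ≤ edist a b := by
  rw [eVariationOn.eq_of_eqOn (eqOn_extend_segment a b)]
  have h := ((lipschitzWith_lineMap a b).lipschitzOnWith (s := Icc (0 : ℝ) 1)).eVariationOn_Icc_le
  rwa [sub_zero, ENNReal.ofReal_one, mul_one, ← edist_nndist] at h

end Path

theorem circleMap_dist_arg (c p : ℂ) : circleMap c (dist p c) (arg (p - c)) = p := by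
  rw [circleMap, dist_eq_norm, norm_mul_exp_arg_mul_I, add_sub_cancel]

theorem wbtw_circleMap_arg {c p : ℂ} {R : ℝ} (hp : dist p c ≤ R) :
    Wbtw ℝ c p (circleMap c R (arg (p - c))) := by
  have hpolar (s : ℝ) : s • exp (arg (p - c) * I) +ᵥ c = circleMap c s (arg (p - c)) := by
    rw [circleMap, vadd_eq_add, real_smul, add_comm]
  have h := wbtw_smul_vadd_smul_vadd_of_nonneg_of_le c (exp (arg (p - c) * I)) dist_nonneg hp
  rwa [hpolar, hpolar, circleMap_dist_arg] at h

/-- Turning by the representative of `β - α` in `(-π, π]`, this is the shorter arc from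
angle `α` to angle `β`. -/
noncomputable def minorArc (c : ℂ) (R α β : ℝ) :
    Path (circleMap c R α) (circleMap c R β) where
  toFun t := circleMap c R (α + toIocMod two_pi_pos (-π) (β - α) * t)
  continuous_toFun := by fun_prop
  source' := by simp
  target' := by
    have h := toIocMod_add_toIocDiv_zsmul two_pi_pos (-π) (β - α)
    rw [Set.Icc.coe_one, mul_one,
      ← (periodic_circleMap c R).zsmul (toIocDiv two_pi_pos (-π) (β - α)), add_assoc, h,
      add_sub_cancel]

theorem dist_minorArc (c : ℂ) (R α β : ℝ) (t : unitInterval) :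
    dist (minorArc c R α β t) c = |R| :=
  circleMap_mem_sphere' c R _

theorem eVariationOn_extend_minorArc_le (c : ℂ) (R α β : ℝ) :
    eVariationOn (minorArc c R α β).extend (Icc 0 1) ≤ ENNReal.ofReal (π * |R|) := by
  set δ := toIocMod two_pi_pos (-π) (β - α)
  have hδ : |δ| ≤ π := by
    have h := toIocMod_mem_Ioc two_pi_pos (-π) (β - α)
    exact abs_le.2 ⟨h.1.le, by linarith [h.2]⟩
  have hlip : LipschitzOnWith (Real.toNNReal (π * |R|)) (fun t => circleMap c R (α + δ * t))
      (Icc 0 1) := by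
    refine LipschitzOnWith.of_dist_le_mul fun s _ t _ => ?_
    calc dist (circleMap c R (α + δ * s)) (circleMap c R (α + δ * t))
        ≤ |R| * dist (α + δ * s) (α + δ * t) := (lipschitzWith_circleMap c R).dist_le_mul _ _
      _ = |R| * |δ| * dist s t := by
        rw [Real.dist_eq, Real.dist_eq, add_sub_add_left_eq_sub, ← mul_sub, abs_mul, mul_assoc]
      _ ≤ Real.toNNReal (π * |R|) * dist s t := by
        rw [Real.coe_toNNReal _ (by positivity), mul_comm π]
        gcongr
  have heq : EqOn (minorArc c R α β).extend (fun t => circleMap c R (α + δ * t)) (Icc 0 1) :=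
    fun t ht => (minorArc c R α β).extend_apply ht
  rw [eVariationOn.eq_of_eqOn heq]
  simpa [ENNReal.ofReal] using hlip.eVariationOn_Icc_le

theorem exists_path_via_circle (c p q : ℂ) {R : ℝ} (hp : dist p c ≤ R) (hq : dist q c ≤ R) :
    ∃ γ : Path p q, (∀ w ∈ range γ, dist w c = R ∨ Wbtw ℝ c p w ∨ Wbtw ℝ c q w) ∧
      eVariationOn γ.extend (Icc 0 1) ≤ ENNReal.ofReal ((π + 2) * R) := by
  have hR : 0 ≤ R := dist_nonneg.trans hp
  set p₁ := circleMap c R (arg (p - c))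
  set q₁ := circleMap c R (arg (q - c))
  have hpp₁ : Wbtw ℝ c p p₁ := wbtw_circleMap_arg hp
  have hqq₁ : Wbtw ℝ c q q₁ := wbtw_circleMap_arg hq
  have hdist_center (θ : ℝ) : dist c (circleMap c R θ) = R := by
    rw [dist_comm]; exact circleMap_mem_sphere c hR θ
  have hpp₁_le : dist p p₁ ≤ R := by
    linarith [hpp₁.dist_add_dist, hdist_center (arg (p - c)), dist_nonneg (x := c) (y := p)]
  have hq₁q_le : dist q₁ q ≤ R := by
    linarith [hqq₁.dist_add_dist, hdist_center (arg (q - c)), dist_nonneg (x := c) (y := q),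
      dist_comm q q₁]
  refine ⟨(Path.segment p p₁).trans ((minorArc c R _ _).trans (Path.segment q₁ q)), ?_, ?_⟩
  · simp only [Path.trans_range, Path.range_segment, mem_union, mem_segment_iff_wbtw]
    rintro w (hw | ⟨t, rfl⟩ | hw)
    · exact .inr (.inl (hpp₁.trans_right_left hw))
    · exact .inl ((dist_minorArc c R _ _ t).trans (abs_of_nonneg hR))
    · exact .inr (.inr (hqq₁.trans_right_left hw.symm))
  · rw [Path.eVariationOn_extend_trans, Path.eVariationOn_extend_trans]
    have hseg {a b : ℂ} (hab : dist a b ≤ R) :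
        eVariationOn (Path.segment a b).extend (Icc 0 1) ≤ ENNReal.ofReal R :=
      (Path.eVariationOn_extend_segment_le a b).trans
        (by rw [edist_dist]; exact ENNReal.ofReal_le_ofReal hab)
    calc _ ≤ ENNReal.ofReal R + (ENNReal.ofReal (π * R) + ENNReal.ofReal R) := by
          gcongr
          · exact hseg hpp₁_le
          · simpa [abs_of_nonneg hR] using eVariationOn_extend_minorArc_le c R _ _
          · exact hseg hq₁q_le
      _ = ENNReal.ofReal ((π + 2) * R) := by
          rw [← ENNReal.ofReal_add (by positivity) hR, ← ENNReal.ofReal_add hR (by positivity)]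
          ring_nf

theorem detour_in_flat_plane_general {X : Type*} [MetricSpace X]
    (hX : IsCAT0 X) (E : Set X)
    (f : EuclideanSpace ℝ (Fin 2) → X) (hf : Isometry f) (hrange : Set.range f = E)
    (O : X) (r : ℝ) (P Q : X)
    (hPE : P ∈ E) (hQE : Q ∈ E) (hP : dist O P = r) (hQ : dist O Q = r) :
    ∃ γ : ℝ → X, ContinuousOn γ (Set.Icc 0 1) ∧ γ 0 = P ∧ γ 1 = Q ∧
      (∀ t ∈ Set.Icc (0:ℝ) 1, r ≤ dist O (γ t)) ∧
      eVariationOn γ (Set.Icc 0 1) ≤ ENNReal.ofReal ((Real.pi + 2) * r) := by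
  set F : ℂ → X := f ∘ orthonormalBasisOneI.repr
  have hF : Isometry F := hf.comp orthonormalBasisOneI.repr.isometry
  have hFE : range F = E := orthonormalBasisOneI.repr.surjective.range_comp f ▸ hrange
  obtain ⟨p, rfl⟩ : P ∈ range F := hFE ▸ hPE
  obtain ⟨q, rfl⟩ : Q ∈ range F := hFE ▸ hQE
  obtain ⟨c, hc⟩ := hF.exists_forall_dist_le O
  have hcr : dist O (F c) ≤ r := hP ▸ hc p
  set R := √(r ^ 2 - dist O (F c) ^ 2)
  obtain ⟨γ, hγ, hlen⟩ := exists_path_via_circle c p q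
    (hX.dist_le_sqrt_of_dist_eq hF hc hP) (hX.dist_le_sqrt_of_dist_eq hF hc hQ)
  refine ⟨F ∘ γ.extend, (hF.continuous.comp γ.continuous_extend).continuousOn, by simp,
    by simp, fun t _ => ?_, ?_⟩
  · rcases hγ _ (γ.extend_range ▸ mem_range_self t) with hw | hw | hw
    · exact hX.le_dist_of_dist_eq_sqrt hF hc hcr hw
    · exact hP ▸ hX.dist_le_of_wbtw hF hc hw
    · exact hQ ▸ hX.dist_le_of_wbtw hF hc hw
  · have hRr : R ≤ r := Real.sqrt_le_left (dist_nonneg.trans hcr) |>.2 (by nlinarith)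
    calc eVariationOn (F ∘ γ.extend) (Icc 0 1) ≤ eVariationOn γ.extend (Icc 0 1) := by
          simpa using hF.lipschitz.lipschitzOnWith.comp_eVariationOn_le (mapsTo_univ _ _)
      _ ≤ ENNReal.ofReal ((π + 2) * R) := hlen
      _ ≤ ENNReal.ofReal ((π + 2) * r) := by gcongr

/-- Let `X` be a CAT(0) space with the geodesic extension property, `E ⊆ X` a
complete convex subset isometric to the Euclidean plane, `O ∈ X`, `r > 0`.
Any two points `P, Q ∈ S(O, r) ∩ E` are joined by a path avoiding the open
ball `B(O, r)` of length at most `(π + 2) * r`. -/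
theorem detour_in_flat_plane {X : Type*} [MetricSpace X]
    (hX : IsCAT0 X) (hext : GeodesicExtension X)
    (E : Set X) (hconv : IsConvexSubset X E) (hcomp : IsComplete E)
    (f : EuclideanSpace ℝ (Fin 2) → X) (hf : Isometry f) (hrange : Set.range f = E)
    (O : X) (r : ℝ) (hr : 0 < r) (P Q : X)
    (hPE : P ∈ E) (hQE : Q ∈ E) (hP : dist O P = r) (hQ : dist O Q = r) :
    ∃ γ : ℝ → X, ContinuousOn γ (Set.Icc 0 1) ∧ γ 0 = P ∧ γ 1 = Q ∧
      (∀ t ∈ Set.Icc (0:ℝ) 1, r ≤ dist O (γ t)) ∧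
      eVariationOn γ (Set.Icc 0 1) ≤ ENNReal.ofReal ((Real.pi + 2) * r) :=
  detour_in_flat_plane_general hX E f hf hrange O r P Q hPE hQE hP hQ
end

section
/- Let X be a metric space and suppose that for every point O ∈ X and all r > 0 the detour function satisfies μ(r) ≤ q(r) for a polynomial q of degree d, and that there exist a point O and two geodesic rays γ, γ' from O such that every r-detour path between γ and γ' has length at least p(r) for a polynomial p of degree d with positive leading coefficient. Then the detour function μ of X is equivalent, under the growth-rate equivalence, to the polynomial r^d. -/
open Set Metric ENNReal

/-- The `(O, r)`-detour distance between `P` and `Q`. -/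
noncomputable def detourDist {X : Type*} [MetricSpace X] (O : X) (r : ℝ)
    (P Q : X) : ℝ≥0∞ :=
  ⨅ (γ : ℝ → X) (_ : ContinuousOn γ (Set.Icc 0 1)) (_ : γ 0 = P) (_ : γ 1 = Q)
    (_ : ∀ t ∈ Set.Icc (0:ℝ) 1, r ≤ dist O (γ t)),
    eVariationOn γ (Set.Icc 0 1)

/-- The detour function of `(X, O)`: the supremum of detour distances between
points of the sphere `S(O, r)`. -/
noncomputable def detourFun {X : Type*} [MetricSpace X] (O : X) (r : ℝ) :
    ℝ≥0∞ :=
  ⨆ (P : X) (Q : X) (_ : dist O P = r) (_ : dist O Q = r), detourDist O r P Q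

/-- `f ⪯ g` for `ℝ≥0∞`-valued functions. -/
def GrowthLE (f g : ℝ → ℝ≥0∞) : Prop :=
  ∃ A B C D E : ℝ, 0 < A ∧ 0 < B ∧ 0 < C ∧ 0 < D ∧ 0 < E ∧
    ∀ x : ℝ, 0 < x →
      f x ≤ ENNReal.ofReal A * g (B * x + C) + ENNReal.ofReal (D * x + E)

/-- `f ~ g` iff `f ⪯ g` and `g ⪯ f`. -/
def GrowthEquiv (f g : ℝ → ℝ≥0∞) : Prop := GrowthLE f g ∧ GrowthLE g f

/-- A unit-speed geodesic ray issuing from `O`. -/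
def IsRayFrom {X : Type*} [MetricSpace X] (O : X) (γ : ℝ → X) : Prop :=
  γ 0 = O ∧ ∀ s t : ℝ, 0 ≤ s → 0 ≤ t → dist (γ s) (γ t) = |s - t|

/-!
The sphere points `γ r` and `γ' r` are joined only by `r`-detour paths of length at least
`p r`, which dominates `(lc p / 2) r ^ d` once `r` is large; evaluating the detour function at
`x + C` for a large constant `C` absorbs the small radii. The upper bound only needs
`q x ≤ M (x + 1) ^ d` for `x ≥ 0`.
-/

namespace Polynomial

theorem exists_pos_eval_le_mul_add_one_pow (q : ℝ[X]) :
    ∃ M : ℝ, 0 < M ∧ ∀ x : ℝ, 0 ≤ x → q.eval x ≤ M * (x + 1) ^ q.natDegree := by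
  refine ⟨∑ i ∈ Finset.range (q.natDegree + 1), |q.coeff i| + 1,
    by positivity, fun x hx => ?_⟩
  have hx1 : (1 : ℝ) ≤ x + 1 := by linarith
  calc q.eval x
        ≤ ∑ i ∈ Finset.range (q.natDegree + 1), |q.coeff i| * (x + 1) ^ q.natDegree := by
        rw [eval_eq_sum_range]
        refine Finset.sum_le_sum fun i hi => ?_
        have hid : i ≤ q.natDegree := Nat.lt_succ_iff.mp (Finset.mem_range.mp hi)
        calc q.coeff i * x ^ i ≤ |q.coeff i| * x ^ i := by gcongr; exact le_abs_self _
          _ ≤ |q.coeff i| * (x + 1) ^ i := by gcongr; linarith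
          _ ≤ |q.coeff i| * (x + 1) ^ q.natDegree := by gcongr
    _ ≤ _ := by
        rw [← Finset.sum_mul]
        nlinarith [pow_nonneg (zero_le_one.trans hx1) q.natDegree]

theorem eventually_mul_pow_le_eval {p : ℝ[X]} {c : ℝ} (hc : c < p.leadingCoeff) :
    ∀ᶠ r in Filter.atTop, c * r ^ p.natDegree ≤ p.eval r := by
  have hε : 0 < (p.leadingCoeff - c) / (|p.leadingCoeff| + 1) := by
    apply div_pos <;> linarith [abs_nonneg p.leadingCoeff]
  have hεlc : (p.leadingCoeff - c) / (|p.leadingCoeff| + 1) * |p.leadingCoeff| ≤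
      p.leadingCoeff - c := by
    rw [div_mul_eq_mul_div, div_le_iff₀ (by positivity)]
    nlinarith [abs_nonneg p.leadingCoeff]
  filter_upwards [p.isEquivalent_atTop_lead.isLittleO.def hε,
    Filter.eventually_ge_atTop 0] with r hclose hr
  have hrd : 0 ≤ r ^ p.natDegree := pow_nonneg hr _
  simp only [Pi.sub_apply, Real.norm_eq_abs, abs_mul, abs_of_nonneg hrd] at hclose
  nlinarith [(abs_le.mp hclose).1, mul_le_mul_of_nonneg_right hεlc hrd]

end Polynomial

theorem GrowthLE.of_le_mul_comp {f g : ℝ → ℝ≥0∞} {A B C : ℝ} (hA : 0 < A) (hB : 0 < B)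
    (hC : 0 < C) (h : ∀ x : ℝ, 0 < x → f x ≤ ENNReal.ofReal A * g (B * x + C)) :
    GrowthLE f g :=
  ⟨A, B, C, 1, 1, hA, hB, hC, one_pos, one_pos, fun x hx => (h x hx).trans le_self_add⟩

theorem growthLE_pow_of_le_eval {f : ℝ → ℝ≥0∞} {q : Polynomial ℝ} {d : ℕ}
    (hqd : q.natDegree = d)
    (h : ∀ r : ℝ, 0 < r → f r ≤ ENNReal.ofReal (q.eval r)) :
    GrowthLE f (fun r => ENNReal.ofReal (r ^ d)) := by
  obtain ⟨M, hM, hqM⟩ := q.exists_pos_eval_le_mul_add_one_pow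
  refine GrowthLE.of_le_mul_comp hM one_pos one_pos fun x hx => ?_
  rw [one_mul, ← ENNReal.ofReal_mul hM.le, ← hqd]
  exact (h x hx).trans (ENNReal.ofReal_le_ofReal (hqM x hx.le))

theorem pow_growthLE_of_eval_le {f : ℝ → ℝ≥0∞} {p : Polynomial ℝ} {d : ℕ}
    (hpd : p.natDegree = d)
    (hpl : 0 < p.leadingCoeff) (h : ∀ r : ℝ, 0 < r → ENNReal.ofReal (p.eval r) ≤ f r) :
    GrowthLE (fun r => ENNReal.ofReal (r ^ d)) f := by
  obtain ⟨R, hR⟩ := Filter.eventually_atTop.mp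
    (Polynomial.eventually_mul_pow_le_eval (half_lt_self hpl))
  have hA : 0 < 2 / p.leadingCoeff := div_pos two_pos hpl
  refine GrowthLE.of_le_mul_comp hA one_pos (zero_lt_one.trans_le (le_max_right R 1))
    fun x hx => ?_
  set r := 1 * x + max R 1
  have hxr : x ≤ r := by linarith [le_max_right R 1]
  have hRr : R ≤ r := by linarith [le_max_left R 1]
  have hxp : x ^ d ≤ 2 / p.leadingCoeff * p.eval r :=
    calc x ^ d ≤ r ^ d := pow_le_pow_left₀ hx.le hxr d
      _ = 2 / p.leadingCoeff * (p.leadingCoeff / 2 * r ^ d) := by field_simp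
      _ ≤ 2 / p.leadingCoeff * p.eval r := mul_le_mul_of_nonneg_left (hpd ▸ hR r hRr) hA.le
  calc ENNReal.ofReal (x ^ d) ≤ ENNReal.ofReal (2 / p.leadingCoeff * p.eval r) :=
        ENNReal.ofReal_le_ofReal hxp
    _ = ENNReal.ofReal (2 / p.leadingCoeff) * ENNReal.ofReal (p.eval r) :=
        ENNReal.ofReal_mul hA.le
    _ ≤ ENNReal.ofReal (2 / p.leadingCoeff) * f r := by gcongr; exact h r (hx.trans_le hxr)

theorem IsRayFrom.dist_eq {X : Type*} [MetricSpace X] {O : X} {γ : ℝ → X}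
    (hγ : IsRayFrom O γ) {r : ℝ} (hr : 0 ≤ r) : dist O (γ r) = r := by
  rw [← hγ.1, hγ.2 0 r le_rfl hr, zero_sub, abs_neg, abs_of_nonneg hr]

section Detour

variable {X : Type*} [MetricSpace X] {O : X} {r : ℝ}

theorem le_detourDist {P Q : X} {c : ℝ≥0∞}
    (h : ∀ α : ℝ → X, ContinuousOn α (Icc 0 1) → α 0 = P → α 1 = Q →
      (∀ u ∈ Icc (0 : ℝ) 1, r ≤ dist O (α u)) → c ≤ eVariationOn α (Icc 0 1)) :
    c ≤ detourDist O r P Q :=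
  le_iInf fun α => le_iInf fun hα => le_iInf fun h0 => le_iInf fun h1 =>
    le_iInf fun hout => h α hα h0 h1 hout

theorem detourDist_le_detourFun {P Q : X} (hP : dist O P = r) (hQ : dist O Q = r) :
    detourDist O r P Q ≤ detourFun O r :=
  le_iSup_of_le P <| le_iSup_of_le Q <| le_iSup_of_le hP <| le_iSup_of_le hQ le_rfl

end Detour

/-- If the detour function of `X` is bounded above (for every base point) by a
degree-`d` polynomial, and some pair of geodesic rays from a point `O` admits
only `r`-detour paths of length at least `p r` for a degree-`d` polynomial `p`
with positive leading coefficient, then the detour function is equivalent to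
`r ^ d` under the growth-rate equivalence. -/
theorem detourFun_equiv_pow {X : Type*} [MetricSpace X] (d : ℕ)
    (q : Polynomial ℝ) (hqd : q.natDegree = d)
    (hupper : ∀ O : X, ∀ r : ℝ, 0 < r →
      detourFun O r ≤ ENNReal.ofReal (q.eval r))
    (O : X) (γ γ' : ℝ → X) (hγ : IsRayFrom O γ) (hγ' : IsRayFrom O γ')
    (p : Polynomial ℝ) (hpd : p.natDegree = d) (hpl : 0 < p.leadingCoeff)
    (hlower : ∀ r : ℝ, 0 < r → ∀ s t : ℝ, r ≤ s → r ≤ t →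
      ∀ α : ℝ → X, ContinuousOn α (Set.Icc 0 1) → α 0 = γ s → α 1 = γ' t →
        (∀ u ∈ Set.Icc (0:ℝ) 1, r ≤ dist O (α u)) →
        ENNReal.ofReal (p.eval r) ≤ eVariationOn α (Set.Icc 0 1)) :
    GrowthEquiv (fun r => detourFun O r) (fun r => ENNReal.ofReal (r ^ d)) := by
  refine ⟨growthLE_pow_of_le_eval hqd (hupper O),
    pow_growthLE_of_eval_le hpd hpl fun r hr => ?_⟩
  exact (le_detourDist fun α => hlower r hr r r le_rfl le_rfl α).trans
    (detourDist_le_detourFun (hγ.dist_eq hr.le) (hγ'.dist_eq hr.le))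
end
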